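/- Let P, Q ∈ ℤ with P·Q ≠ 0 and let p be a prime with p ∣ P and p ∣ Q. Set a = ν_p(P) and b = ν_p(Q), suppose b < 2a, let r ≥ 1 be an integer, and let S = L(P,Q,p^{−r}). Then: (i) an odd natural number n belongs to S if and only if n ≥ 2⌈r/b⌉ + 1; (ii) every natural number n ≥ 2⌈r/b⌉ + 1 belongs to S; (iii) 2⌈r/b⌉ − 1 ∉ S, so the Frobenius number of S equals 2⌈r/b⌉ or 2⌈r/b⌉ − 1; and (iv) every nonzero small element of S is even, so s(S) = ∅ or gcd s(S) ≥ 2. -/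
import Mathlib


/-- The Lucas sequence `U_n(P,Q)`: `U_0 = 0`, `U_1 = 1`,
`U_{n+2} = P·U_{n+1} − Q·U_n`. -/
def lucasU (P Q : ℤ) : ℕ → ℤ
  | 0 => 0
  | 1 => 1
  | n + 2 => P * lucasU P Q (n + 1) - Q * lucasU P Q n

/-- The Lucas semigroup `L(P,Q,R) = {n ∈ ℕ : U_n(P,Q)·R ∈ ℤ}`. -/
def lucasSG (P Q : ℤ) (R : ℚ) : Set ℕ :=
  {n : ℕ | ∃ k : ℤ, (lucasU P Q n : ℚ) * R = (k : ℚ)}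

/-- The local Lucas semigroup `L(P,Q,p^{-r}) = {n ∈ ℕ : ν_p(U_n) ≥ r}`,
equivalently the set of `n` with `U_n · p^{-r} ∈ ℤ`. -/
def localLucasSG (P Q : ℤ) (p : ℕ) (r : ℤ) : Set ℕ :=
  lucasSG P Q ((p : ℚ) ^ (-r))

/-- Ceiling of the quotient `r / a` of natural numbers. -/
def ceilDivNat (r a : ℕ) : ℕ := (⌈(r : ℚ) / (a : ℚ)⌉).toNat

/-- The ordinary ("tail") semigroup `S_m = {0} ∪ {n ∈ ℕ : n ≥ m}`. -/
def tailSG (m : ℕ) : Set ℕ := {n : ℕ | n = 0 ∨ m ≤ n}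

/-- The Frobenius number of `S ⊆ ℕ`: the largest natural number not in `S`
(for a numerical semigroup, `Sᶜ` is finite and nonempty so `sSup` is it). -/
noncomputable def frobNum (S : Set ℕ) : ℕ := sSup Sᶜ

/-- The set of nonzero small elements `s(S) = {n ∈ S : 0 < n < g(S)}`. -/
def smallElems (S : Set ℕ) : Set ℕ := {n : ℕ | n ∈ S ∧ 0 < n ∧ n < frobNum S}

lemma mem_localLucasSG_iff (P Q : ℤ) (p : ℕ) (hp : 0 < p) (r : ℕ) (n : ℕ) :
    n ∈ localLucasSG P Q p (r : ℤ) ↔ (p : ℤ) ^ r ∣ lucasU P Q n := by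
  have hp0 : ((p : ℚ) ^ r) ≠ 0 := by positivity
  constructor
  · rintro ⟨k, hk⟩
    refine ⟨k, ?_⟩
    have : (lucasU P Q n : ℚ) = (p : ℚ) ^ r * (k : ℚ) := by
      rw [zpow_neg, zpow_natCast] at hk
      field_simp at hk
      linarith [hk]
    exact_mod_cast this
  · rintro ⟨k, hk⟩
    refine ⟨k, ?_⟩
    rw [zpow_neg, zpow_natCast, hk]
    push_cast
    field_simp

lemma ceilDivNat_le_iff {r b : ℕ} (hb : 0 < b) (k : ℕ) :
    ceilDivNat r b ≤ k ↔ r ≤ k * b := by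
  have hbq : (0 : ℚ) < b := by exact_mod_cast hb
  rw [ceilDivNat, Int.toNat_le, Int.ceil_le, div_le_iff₀ hbq]
  constructor
  · intro h; exact_mod_cast h
  · intro h; exact_mod_cast h

lemma lucas_val (p : ℕ) (hp : p.Prime) (a b : ℕ) (P' Q' : ℤ)
    (hP' : ¬ (p : ℤ) ∣ P') (hQ' : ¬ (p : ℤ) ∣ Q') (hab : b + 1 ≤ 2 * a) (k : ℕ) :
    ∃ c d : ℤ, lucasU ((p:ℤ)^a * P') ((p:ℤ)^b * Q') (2*k+1) = (p:ℤ)^(k*b) * c ∧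
      ¬ (p:ℤ) ∣ c ∧ lucasU ((p:ℤ)^a * P') ((p:ℤ)^b * Q') (2*k+2) = (p:ℤ)^(k*b+a) * d := by
  set P : ℤ := (p:ℤ)^a * P' with hP
  set Q : ℤ := (p:ℤ)^b * Q' with hQ
  induction k with
  | zero =>
    refine ⟨1, P', ?_, by simpa using (Nat.prime_iff_prime_int.mp hp).not_dvd_one, ?_⟩
    · simp [lucasU]
    · show lucasU P Q 2 = _
      simp [lucasU, hP]
  | succ k ih =>
    obtain ⟨c, d, h1, hc, h2⟩ := ih
    refine ⟨(p:ℤ)^(2*a-(b+1)) * ((p:ℤ) * P' * d) - Q' * c, P' * ((p:ℤ)^(2*a-(b+1)) * ((p:ℤ) * P' * d) - Q' * c) - Q' * d, ?_, ?_, ?_⟩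
    · have : 2*(k+1)+1 = (2*k+1) + 2 := by ring
      rw [this]
      show P * lucasU P Q (2*k+2) - Q * lucasU P Q (2*k+1) = _
      rw [h1, h2, hP, hQ]
      have hpow : (p:ℤ)^a * ((p:ℤ)^(k*b+a) ) = (p:ℤ)^((k+1)*b) * ((p:ℤ)^(2*a-(b+1)) * (p:ℤ)) := by
        rw [← pow_succ, ← pow_add, ← pow_add]
        congr 1
        have hsm : (k+1)*b = k*b + b := by ring
        omega
      calc (p:ℤ)^a * P' * ((p:ℤ)^(k*b+a) * d) - (p:ℤ)^b * Q' * ((p:ℤ)^(k*b) * c)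
          = ((p:ℤ)^a * (p:ℤ)^(k*b+a)) * (P' * d) - (p:ℤ)^((k+1)*b) * (Q' * c) := by
            rw [add_one_mul, ← pow_add]; ring
        _ = _ := by rw [hpow]; ring
    · intro hdvd
      have h1 : (p:ℤ) ∣ (p:ℤ)^(2*a-(b+1)) * ((p:ℤ) * P' * d) := ⟨(p:ℤ)^(2*a-(b+1)) * (P' * d), by ring⟩
      have h2 : (p:ℤ) ∣ Q' * c := (dvd_sub_right h1).mp hdvd
      rcases ((Nat.prime_iff_prime_int.mp hp).dvd_mul.mp h2) with h | h
      · exact hQ' h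
      · exact hc h
    · have : 2*(k+1)+2 = (2*k+2) + 2 := by ring
      rw [this]
      show P * lucasU P Q ((2*k+1)+2) - Q * lucasU P Q (2*k+2) = _
      have e1 : lucasU P Q ((2*k+1)+2) = (p:ℤ)^((k+1)*b) * ((p:ℤ)^(2*a-(b+1)) * ((p:ℤ) * P' * d) - Q' * c) := by
        show P * lucasU P Q (2*k+2) - Q * lucasU P Q (2*k+1) = _
        rw [h1, h2, hP, hQ]
        have hpow : (p:ℤ)^a * ((p:ℤ)^(k*b+a) ) = (p:ℤ)^((k+1)*b) * ((p:ℤ)^(2*a-(b+1)) * (p:ℤ)) := by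
          rw [← pow_succ, ← pow_add, ← pow_add]
          congr 1
          have hsm : (k+1)*b = k*b + b := by ring
          omega
        calc (p:ℤ)^a * P' * ((p:ℤ)^(k*b+a) * d) - (p:ℤ)^b * Q' * ((p:ℤ)^(k*b) * c)
            = ((p:ℤ)^a * (p:ℤ)^(k*b+a)) * (P' * d) - (p:ℤ)^((k+1)*b) * (Q' * c) := by
              rw [add_one_mul, ← pow_add]; ring
          _ = _ := by rw [hpow]; ring
      rw [e1, h2, hP, hQ]
      have hpow1 : (p:ℤ)^a * (p:ℤ)^((k+1)*b) = (p:ℤ)^((k+1)*b + a) := by rw [← pow_add]; ring_nf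
      have hpow2 : (p:ℤ)^b * (p:ℤ)^(k*b+a) = (p:ℤ)^((k+1)*b + a) := by rw [← pow_add]; congr 1; ring
      calc (p:ℤ)^a * P' * ((p:ℤ)^((k+1)*b) * ((p:ℤ)^(2*a-(b+1)) * ((p:ℤ) * P' * d) - Q' * c)) - (p:ℤ)^b * Q' * ((p:ℤ)^(k*b+a) * d)
          = ((p:ℤ)^a * (p:ℤ)^((k+1)*b)) * (P' * ((p:ℤ)^(2*a-(b+1)) * ((p:ℤ) * P' * d) - Q' * c)) - ((p:ℤ)^b * (p:ℤ)^(k*b+a)) * (Q' * d) := by ring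
        _ = _ := by rw [hpow1, hpow2]; ring


/-- Special prime, case `b < 2a` (with `a = ν_p(P)`, `b = ν_p(Q)`), for
`S = L(P,Q,p^{-r})`: (i) an odd `n` lies in `S` iff `n ≥ 2⌈r/b⌉ + 1`;
(ii) every `n ≥ 2⌈r/b⌉ + 1` lies in `S`; (iii) `2⌈r/b⌉ − 1 ∉ S`, so the
Frobenius number of `S` is `2⌈r/b⌉` or `2⌈r/b⌉ − 1`; (iv) every nonzero small
element of `S` is even, so `s(S) = ∅` or `gcd s(S) ≥ 2`. -/
theorem localLucasSG_special_case_b_lt_two_a (P Q : ℤ) (hPQ : P * Q ≠ 0)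
    (p : ℕ) (hp : p.Prime) (hpP : (p : ℤ) ∣ P) (hpQ : (p : ℤ) ∣ Q)
    (hb : padicValInt p Q < 2 * padicValInt p P) (r : ℕ) (hr : 1 ≤ r) :
    (∀ n : ℕ, Odd n →
      (n ∈ localLucasSG P Q p (r : ℤ) ↔
        2 * ceilDivNat r (padicValInt p Q) + 1 ≤ n)) ∧
    (∀ n : ℕ, 2 * ceilDivNat r (padicValInt p Q) + 1 ≤ n →
      n ∈ localLucasSG P Q p (r : ℤ)) ∧
    2 * ceilDivNat r (padicValInt p Q) - 1 ∉ localLucasSG P Q p (r : ℤ) ∧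
    (frobNum (localLucasSG P Q p (r : ℤ)) =
        2 * ceilDivNat r (padicValInt p Q) ∨
      frobNum (localLucasSG P Q p (r : ℤ)) =
        2 * ceilDivNat r (padicValInt p Q) - 1) ∧
    (∀ n ∈ smallElems (localLucasSG P Q p (r : ℤ)), 2 ∣ n) := by
  haveI : Fact p.Prime := ⟨hp⟩
  have hP0 : P ≠ 0 := fun h => hPQ (by simp [h])
  have hQ0 : Q ≠ 0 := fun h => hPQ (by simp [h])
  set a := padicValInt p P with ha
  set b := padicValInt p Q with hbdef
  have ha1 : 1 ≤ a := by
    rcases (padicValInt_dvd_iff 1 P).mp (by simpa using hpP) with h | h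
    · exact absurd h hP0
    · exact h
  have hb1 : 1 ≤ b := by
    rcases (padicValInt_dvd_iff 1 Q).mp (by simpa using hpQ) with h | h
    · exact absurd h hQ0
    · exact h
  obtain ⟨P', hPeq⟩ : (p:ℤ)^a ∣ P := padicValInt_dvd P
  obtain ⟨Q', hQeq⟩ : (p:ℤ)^b ∣ Q := padicValInt_dvd Q
  have hP' : ¬ (p:ℤ) ∣ P' := by
    intro ⟨t, ht⟩
    have : (p:ℤ)^(a+1) ∣ P := ⟨t, by rw [hPeq, ht, pow_succ]; ring⟩
    rcases (padicValInt_dvd_iff (a+1) P).mp this with h | h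
    · exact hP0 h
    · omega
  have hQ' : ¬ (p:ℤ) ∣ Q' := by
    intro ⟨t, ht⟩
    have : (p:ℤ)^(b+1) ∣ Q := ⟨t, by rw [hQeq, ht, pow_succ]; ring⟩
    rcases (padicValInt_dvd_iff (b+1) Q).mp this with h | h
    · exact hQ0 h
    · omega
  have key := lucas_val p hp a b P' Q' hP' hQ' (by omega)
  rw [← hPeq, ← hQeq] at key
  set c := ceilDivNat r b with hc
  have hcb := ceilDivNat_le_iff (r := r) hb1
  have hc1 : 1 ≤ c := by
    by_contra h
    have : r ≤ 0 * b := (hcb 0).mp (by omega)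
    omega
  -- odd membership
  have hodd : ∀ k : ℕ, (2*k+1 ∈ localLucasSG P Q p (r : ℤ) ↔ c ≤ k) := by
    intro k
    obtain ⟨cc, d, h1, hcc, _⟩ := key k
    rw [mem_localLucasSG_iff P Q p hp.pos, h1]
    constructor
    · intro hdvd
      rw [hcb]
      by_contra hlt
      push_neg at hlt
      have hdvd2 : (p:ℤ)^(k*b+1) ∣ (p:ℤ)^(k*b) * cc := dvd_trans (pow_dvd_pow _ (by omega)) hdvd
      obtain ⟨t, ht⟩ := hdvd2
      rw [pow_succ] at ht
      have hpne : ((p:ℤ))^(k*b) ≠ 0 := pow_ne_zero _ (Int.natCast_ne_zero.mpr hp.ne_zero)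
      have : cc = (p:ℤ) * t := by
        have := mul_left_cancel₀ hpne (by linarith [ht] : (p:ℤ)^(k*b) * cc = (p:ℤ)^(k*b) * ((p:ℤ)*t))
        exact this
      exact hcc ⟨t, this⟩
    · intro hck
      have : r ≤ k * b := (hcb k).mp hck
      exact Dvd.dvd.mul_right (pow_dvd_pow _ this) cc
  -- even membership for 2*(k+1) with c ≤ k+... : 2*k+2 with k ≥ c
  have heven : ∀ k : ℕ, c ≤ k → (2*k+2 ∈ localLucasSG P Q p (r : ℤ)) := by
    intro k hk
    obtain ⟨cc, d, _, _, h2⟩ := key k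
    rw [mem_localLucasSG_iff P Q p hp.pos, h2]
    have : r ≤ k * b + a := le_trans ((hcb k).mp hk) (by omega)
    exact Dvd.dvd.mul_right (pow_dvd_pow _ this) d
  have part1 : ∀ n : ℕ, Odd n → (n ∈ localLucasSG P Q p (r : ℤ) ↔ 2 * c + 1 ≤ n) := by
    rintro n ⟨k, hkn⟩
    have hn : n = 2*k+1 := by omega
    rw [hn, hodd k]
    omega
  have part2 : ∀ n : ℕ, 2 * c + 1 ≤ n → n ∈ localLucasSG P Q p (r : ℤ) := by
    intro n hn
    rcases Nat.even_or_odd n with he | ho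
    · obtain ⟨m, hm⟩ := he
      have hm2 : n = 2*(m-1)+2 := by omega
      rw [hm2]
      exact heven (m-1) (by omega)
    · exact (part1 n ho).mpr hn
  have part3 : 2 * c - 1 ∉ localLucasSG P Q p (r : ℤ) := by
    intro hmem
    have h21 : 2*c-1 = 2*(c-1)+1 := by omega
    rw [h21, hodd] at hmem
    omega
  refine ⟨part1, part2, part3, ?_, ?_⟩
  · -- frobenius
    set S := localLucasSG P Q p (r : ℤ)
    have hbdd : BddAbove Sᶜ := ⟨2*c, fun m hm => by
      by_contra hgt
      exact hm (part2 m (by omega))⟩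
    have hne : (Sᶜ).Nonempty := ⟨2*c-1, part3⟩
    have hle : frobNum S ≤ 2*c := csSup_le hne (fun m hm => by
      by_contra hgt
      exact hm (part2 m (by omega)))
    have hge : 2*c-1 ≤ frobNum S := le_csSup hbdd part3
    rcases eq_or_lt_of_le hle with h | h
    · exact Or.inl h
    · exact Or.inr (by omega)
  · -- small elements even
    intro n hn
    obtain ⟨hnS, hn0, hnlt⟩ := hn
    rcases Nat.even_or_odd n with he | ho
    · exact he.two_dvd
    · exfalso
      have := (part1 n ho).mp hnS
      -- frobNum ≤ 2c
      have hne : ((localLucasSG P Q p (r : ℤ))ᶜ).Nonempty := ⟨2*c-1, part3⟩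
      have hle : frobNum (localLucasSG P Q p (r : ℤ)) ≤ 2*c := csSup_le hne (fun m hm => by
        by_contra hgt
        exact hm (part2 m (by omega)))
      omega
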